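/- Let V(z) = (1/2) zᵀ M z − bᵀ z + (J₄/4) Σᵢ zᵢ⁴ with M symmetric positive definite and J₄ ≥ 0. Then V is strictly convex and has a unique global minimizer z*(J₄); moreover ‖z*(J₄) − z*(0)‖ ≤ (J₄/λ_min(M)) · ‖z*(J₄)‖∞² · ‖z*(J₄)‖. -/

import Mathlib

open Matrix BigOperators

noncomputable def opNorm {D : ℕ} (J : Matrix (Fin D) (Fin D) ℝ) : ℝ :=
  ‖(Matrix.toEuclideanCLM (𝕜 := ℝ) J : EuclideanSpace ℝ (Fin D) →L[ℝ] EuclideanSpace ℝ (Fin D))‖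

noncomputable def minEig {D : ℕ} (A : Matrix (Fin D) (Fin D) ℝ) (hA : A.IsHermitian) : ℝ :=
  ⨅ i, hA.eigenvalues i

noncomputable def maxEig {D : ℕ} (A : Matrix (Fin D) (Fin D) ℝ) (hA : A.IsHermitian) : ℝ :=
  ⨆ i, hA.eigenvalues i

noncomputable def l2norm {n : ℕ} (v : Fin n → ℝ) : ℝ := Real.sqrt (∑ i, v i ^ 2)

/-! ### Auxiliary lemmas -/

lemma aux_dot_symm {n : ℕ} (M : Matrix (Fin n) (Fin n) ℝ) (hA : M.IsHermitian)
    (x y : Fin n → ℝ) : x ⬝ᵥ (M *ᵥ y) = y ⬝ᵥ (M *ᵥ x) := by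
  rw [Matrix.dotProduct_mulVec, ← Matrix.mulVec_transpose]
  have hMT : Mᵀ = M := by
    have := hA; rwa [Matrix.IsHermitian, Matrix.conjTranspose_eq_transpose_of_trivial] at this
  rw [hMT, dotProduct_comm]

lemma aux_rayleigh {n : ℕ} [NeZero n] (M : Matrix (Fin n) (Fin n) ℝ) (hA : M.IsHermitian)
    (x : Fin n → ℝ) : minEig M hA * (∑ i, x i ^ 2) ≤ x ⬝ᵥ (M *ᵥ x) := by
  classical
  set U : Matrix (Fin n) (Fin n) ℝ := (hA.eigenvectorUnitary : Matrix (Fin n) (Fin n) ℝ) with hU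
  have hUU : U * star U = 1 := (Matrix.mem_unitaryGroup_iff).mp hA.eigenvectorUnitary.2
  set c : Fin n → ℝ := star U *ᵥ x with hc
  have hspec := hA.spectral_theorem
  have hAx : M *ᵥ x = U *ᵥ ((Matrix.diagonal hA.eigenvalues) *ᵥ c) := by
    conv_lhs => rw [hspec]
    simp [Matrix.mulVec_mulVec, hc, Matrix.mul_assoc]
    rfl
  have hxU : x ᵥ* U = c := by
    rw [hc, ← Matrix.mulVec_transpose]
    congr 1
  have hdot : x ⬝ᵥ (M *ᵥ x) = ∑ i, hA.eigenvalues i * c i ^ 2 := by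
    rw [hAx, Matrix.dotProduct_mulVec]
    rw [hxU]
    simp only [dotProduct, Matrix.mulVec_diagonal]
    exact Finset.sum_congr rfl fun i _ => by ring
  have hsum : ∑ i, c i ^ 2 = ∑ i, x i ^ 2 := by
    have h1 : c ⬝ᵥ c = x ⬝ᵥ x := by
      calc c ⬝ᵥ c = (x ᵥ* U) ⬝ᵥ (star U *ᵥ x) := by rw [hxU, ← hc]
        _ = x ⬝ᵥ (U *ᵥ (star U *ᵥ x)) := (Matrix.dotProduct_mulVec _ _ _).symm
        _ = x ⬝ᵥ x := by rw [Matrix.mulVec_mulVec, hUU, Matrix.one_mulVec]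
    simpa [dotProduct, sq] using h1
  rw [hdot, ← hsum, Finset.mul_sum]
  apply Finset.sum_le_sum
  intro i _
  have hle : minEig M hA ≤ hA.eigenvalues i :=
    ciInf_le (Set.Finite.bddBelow (Set.finite_range _)) i
  nlinarith [sq_nonneg (c i)]

lemma aux_minEig_pos {n : ℕ} [NeZero n] (M : Matrix (Fin n) (Fin n) ℝ) (hM : M.PosDef) :
    0 < minEig M hM.1 := by
  have hpos : ∀ i, 0 < hM.1.eigenvalues i := hM.eigenvalues_pos
  obtain ⟨i0, hi0⟩ := Finite.exists_min hM.1.eigenvalues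
  exact lt_of_lt_of_le (hpos i0) (le_ciInf hi0)

lemma aux_cauchy_schwarz {n : ℕ} (u w : Fin n → ℝ) :
    u ⬝ᵥ w ≤ l2norm u * l2norm w := by
  have h := Finset.sum_mul_sq_le_sq_mul_sq Finset.univ u w
  calc u ⬝ᵥ w ≤ |∑ i, u i * w i| := le_abs_self _
    _ = Real.sqrt ((∑ i, u i * w i) ^ 2) := (Real.sqrt_sq_eq_abs _).symm
    _ ≤ Real.sqrt ((∑ i, u i ^ 2) * (∑ i, w i ^ 2)) := Real.sqrt_le_sqrt h
    _ = l2norm u * l2norm w := by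
        rw [l2norm, l2norm, Real.sqrt_mul (Finset.sum_nonneg fun i _ => sq_nonneg _)]

lemma aux_quad_strict {n : ℕ} (M : Matrix (Fin n) (Fin n) ℝ) (hM : M.PosDef) :
    StrictConvexOn ℝ Set.univ (fun z : Fin n → ℝ => (1/2) * (z ⬝ᵥ M *ᵥ z)) := by
  refine ⟨convex_univ, ?_⟩
  intro x _ y _ hxy s t hs ht hst
  have hpos : 0 < (x - y) ⬝ᵥ (M *ᵥ (x - y)) := by
    have h := hM.dotProduct_mulVec_pos (sub_ne_zero.mpr hxy)
    simpa using h
  have hexp2 : (x - y) ⬝ᵥ (M *ᵥ (x - y)) =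
      x ⬝ᵥ (M *ᵥ x) - x ⬝ᵥ (M *ᵥ y) - y ⬝ᵥ (M *ᵥ x) + y ⬝ᵥ (M *ᵥ y) := by
    simp [Matrix.mulVec_sub, sub_dotProduct, dotProduct_sub]
    ring
  rw [hexp2] at hpos
  have hexp : (s • x + t • y) ⬝ᵥ (M *ᵥ (s • x + t • y)) =
      s^2 * (x ⬝ᵥ (M *ᵥ x)) + s*t*(x ⬝ᵥ (M *ᵥ y)) + s*t*(y ⬝ᵥ (M *ᵥ x))
        + t^2 * (y ⬝ᵥ (M *ᵥ y)) := by
    simp [Matrix.mulVec_add, Matrix.mulVec_smul, dotProduct_add, add_dotProduct,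
      smul_dotProduct, dotProduct_smul, smul_eq_mul]
    ring
  show (1/2) * ((s • x + t • y) ⬝ᵥ (M *ᵥ (s • x + t • y))) <
      s • ((1/2) * (x ⬝ᵥ (M *ᵥ x))) + t • ((1/2) * (y ⬝ᵥ (M *ᵥ y)))
  rw [hexp, smul_eq_mul, smul_eq_mul]
  have ht' : t = 1 - s := by linarith
  subst ht'
  nlinarith [mul_pos (mul_pos hs ht) hpos]

lemma aux_rest_convex {n : ℕ} (bv : Fin n → ℝ) (J : ℝ) (hJ : 0 ≤ J) :
    ConvexOn ℝ Set.univ (fun z : Fin n → ℝ => -(bv ⬝ᵥ z) + (J/4) * ∑ i, z i ^ 4) := by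
  refine ⟨convex_univ, ?_⟩
  intro x _ y _ s t hs ht hst
  have hlin : bv ⬝ᵥ (s • x + t • y) = s * (bv ⬝ᵥ x) + t * (bv ⬝ᵥ y) := by
    simp [dotProduct_add, dotProduct_smul, smul_eq_mul]
  have hq : ∑ i, (s • x + t • y) i ^ 4 ≤ s * (∑ i, x i ^ 4) + t * (∑ i, y i ^ 4) := by
    rw [Finset.mul_sum, Finset.mul_sum, ← Finset.sum_add_distrib]
    apply Finset.sum_le_sum
    intro i _
    have hcvx := (Even.convexOn_pow (⟨2, rfl⟩ : Even 4)).2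
      (Set.mem_univ (x i)) (Set.mem_univ (y i)) hs ht hst
    simpa [smul_eq_mul] using hcvx
  have h4 : (0:ℝ) ≤ J/4 := by linarith
  show -(bv ⬝ᵥ (s • x + t • y)) + (J/4) * ∑ i, (s • x + t • y) i ^ 4 ≤
      s • (-(bv ⬝ᵥ x) + (J/4) * ∑ i, x i ^ 4) + t • (-(bv ⬝ᵥ y) + (J/4) * ∑ i, y i ^ 4)
  rw [hlin, smul_eq_mul, smul_eq_mul]
  nlinarith [mul_le_mul_of_nonneg_left hq h4]

theorem stmt17 {n : ℕ} [NeZero n] (M : Matrix (Fin n) (Fin n) ℝ) (hM : M.PosDef)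
    (b : Fin n → ℝ) (J₄ : ℝ) (hJ₄ : 0 ≤ J₄)
    (V : (Fin n → ℝ) → ℝ)
    (hV : V = fun z => (1 / 2) * (z ⬝ᵥ (M *ᵥ z)) - b ⬝ᵥ z + (J₄ / 4) * ∑ i, z i ^ 4) :
    StrictConvexOn ℝ Set.univ V ∧
      (∃! zs : Fin n → ℝ, ∀ z, V zs ≤ V z) ∧
      (∀ zs : Fin n → ℝ, (∀ z, V zs ≤ V z) →
        l2norm (zs - M⁻¹ *ᵥ b) ≤
          (J₄ / minEig M hM.1) * (⨆ i, |zs i|) ^ 2 * l2norm zs) := by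
  have hmpos : 0 < minEig M hM.1 := aux_minEig_pos M hM
  have hdet : IsUnit M.det := isUnit_iff_ne_zero.mpr (ne_of_gt hM.det_pos)
  -- strict convexity
  have hstrict : StrictConvexOn ℝ Set.univ V := by
    have h3 := (aux_quad_strict M hM).add_convexOn (aux_rest_convex b J₄ hJ₄)
    have heq : V = (fun z : Fin n → ℝ => (1/2) * (z ⬝ᵥ M *ᵥ z)) +
        (fun z : Fin n → ℝ => -(b ⬝ᵥ z) + (J₄/4) * ∑ i, z i ^ 4) := by
      funext z; rw [hV]; simp only [Pi.add_apply]; ring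
    rw [heq]; exact h3
  -- continuity
  have hcont : Continuous V := by
    rw [hV]
    simp only [dotProduct, Matrix.mulVec]
    fun_prop
  -- coercive lower bound
  have hlow : ∀ z : Fin n → ℝ,
      (minEig M hM.1 / 2) * ‖z‖^2 - (∑ i, |b i|) * ‖z‖ ≤ V z := by
    intro z
    have h1 : minEig M hM.1 * (∑ i, z i ^ 2) ≤ z ⬝ᵥ (M *ᵥ z) := aux_rayleigh M hM.1 z
    have h2 : ‖z‖^2 ≤ ∑ i, z i ^ 2 := by
      obtain ⟨i0, hi0⟩ := Finite.exists_max (fun i => ‖z i‖)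
      have hz : ‖z‖ ≤ ‖z i0‖ := (pi_norm_le_iff_of_nonneg (norm_nonneg _)).mpr hi0
      calc ‖z‖^2 ≤ ‖z i0‖^2 := by nlinarith [norm_nonneg z, norm_nonneg (z i0)]
        _ = z i0 ^ 2 := by rw [Real.norm_eq_abs, sq_abs]
        _ ≤ ∑ i, z i ^ 2 := Finset.single_le_sum (f := fun i => z i ^ 2) (fun i _ => sq_nonneg _) (Finset.mem_univ i0)
    have h3 : b ⬝ᵥ z ≤ (∑ i, |b i|) * ‖z‖ := by
      calc b ⬝ᵥ z = ∑ i, b i * z i := rfl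
        _ ≤ ∑ i, |b i| * ‖z‖ := by
            apply Finset.sum_le_sum
            intro i _
            calc b i * z i ≤ |b i * z i| := le_abs_self _
              _ = |b i| * |z i| := abs_mul _ _
              _ ≤ |b i| * ‖z‖ := by
                  have := norm_le_pi_norm z i
                  rw [Real.norm_eq_abs] at this
                  exact mul_le_mul_of_nonneg_left this (abs_nonneg _)
        _ = (∑ i, |b i|) * ‖z‖ := by rw [Finset.sum_mul]
    have h4 : (0:ℝ) ≤ (J₄ / 4) * ∑ i, z i ^ 4 := by positivity
    have h5 := mul_le_mul_of_nonneg_left h2 (le_of_lt (half_pos hmpos))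
    rw [hV]
    dsimp only
    linarith
  have hcoer : Filter.Tendsto V (Filter.cocompact _) Filter.atTop := by
    set m := minEig M hM.1 with hm
    set K := ∑ i, |b i| with hK
    have hψ : Filter.Tendsto (fun t : ℝ => (m/2) * t^2 - K * t) Filter.atTop Filter.atTop := by
      have heq : (fun t : ℝ => (m/2) * t^2 - K * t) = fun t : ℝ => t * ((m/2) * t - K) := by
        funext t; ring
      rw [heq]
      exact Filter.tendsto_id.atTop_mul_atTop₀
        (Filter.tendsto_atTop_add_const_right _ _
          ((Filter.tendsto_id (α := ℝ)).const_mul_atTop (half_pos hmpos)))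
    exact Filter.tendsto_atTop_mono hlow (hψ.comp tendsto_norm_cocompact_atTop)
  obtain ⟨zmin, hzmin⟩ := hcont.exists_forall_le hcoer
  -- first order condition & bound
  have hbound : ∀ zs : Fin n → ℝ, (∀ z, V zs ≤ V z) →
      l2norm (zs - M⁻¹ *ᵥ b) ≤
        (J₄ / minEig M hM.1) * (⨆ i, |zs i|) ^ 2 * l2norm zs := by
    intro zs hmin
    have hfoc : ∀ j, (M *ᵥ zs) j + J₄ * zs j ^ 3 = b j := by
      intro j
      set v : Fin n → ℝ := Pi.single j 1 with hv
      set g : ℝ → ℝ := fun t => V (zs + t • v) with hg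
      have hloc : IsLocalMin g 0 := by
        apply Filter.Eventually.of_forall
        intro t
        have e0 : zs + (0:ℝ) • v = zs := by simp
        show g 0 ≤ g t
        rw [hg]
        simp only [e0]
        exact hmin (zs + t • v)
      have hgeq : g = fun t => ((1/2) * (zs ⬝ᵥ (M *ᵥ zs)) - b ⬝ᵥ zs)
          + (zs ⬝ᵥ (M *ᵥ v) - b ⬝ᵥ v) * t
          + ((1/2) * (v ⬝ᵥ (M *ᵥ v))) * t^2
          + (J₄/4) * ∑ i, (zs i + t * v i) ^ 4 := by
        funext t
        have hsym := aux_dot_symm M hM.1 zs v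
        rw [hg, hV]
        simp only [Matrix.mulVec_add, Matrix.mulVec_smul, dotProduct_add, add_dotProduct,
          dotProduct_smul, smul_dotProduct, smul_eq_mul, Pi.add_apply, Pi.smul_apply]
        linear_combination (-t/2) * hsym
      have hq : ∀ i : Fin n, HasDerivAt (fun t : ℝ => (zs i + t * v i) ^ 4)
          ((4:ℕ) * (zs i + 0 * v i) ^ 3 * v i) 0 := by
        intro i
        have hl : HasDerivAt (fun t : ℝ => zs i + t * v i) (v i) 0 := by
          simpa using ((hasDerivAt_id (0:ℝ)).mul_const (v i)).const_add (zs i)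
        simpa using hl.fun_pow 4
      have hsum : HasDerivAt (fun t : ℝ => ∑ i, (zs i + t * v i) ^ 4)
          (∑ i, (4:ℕ) * (zs i + 0 * v i) ^ 3 * v i) 0 := HasDerivAt.fun_sum fun i _ => hq i
      have h1 : HasDerivAt (fun t : ℝ => ((1/2) * (zs ⬝ᵥ (M *ᵥ zs)) - b ⬝ᵥ zs)
          + (zs ⬝ᵥ (M *ᵥ v) - b ⬝ᵥ v) * t) (zs ⬝ᵥ (M *ᵥ v) - b ⬝ᵥ v) 0 := by
        simpa using (((hasDerivAt_id (0:ℝ)).const_mul (zs ⬝ᵥ (M *ᵥ v) - b ⬝ᵥ v)).const_add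
          ((1/2) * (zs ⬝ᵥ (M *ᵥ zs)) - b ⬝ᵥ zs))
      have h2 : HasDerivAt (fun t : ℝ => ((1/2) * (v ⬝ᵥ (M *ᵥ v))) * t^2) 0 0 := by
        simpa using ((hasDerivAt_pow 2 (0:ℝ)).const_mul ((1/2) * (v ⬝ᵥ (M *ᵥ v))))
      have h3 : HasDerivAt (fun t : ℝ => (J₄/4) * ∑ i, (zs i + t * v i) ^ 4)
          ((J₄/4) * ∑ i, (4:ℕ) * (zs i + 0 * v i) ^ 3 * v i) 0 := hsum.const_mul _
      have hder : HasDerivAt g ((zs ⬝ᵥ (M *ᵥ v) - b ⬝ᵥ v) + 0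
          + (J₄/4) * ∑ i, (4:ℕ) * (zs i + 0 * v i) ^ 3 * v i) 0 := by
        rw [hgeq]
        exact (h1.add h2).add h3
      have hzero := hloc.hasDerivAt_eq_zero hder
      have e1 : zs ⬝ᵥ (M *ᵥ v) = (M *ᵥ zs) j := by
        rw [aux_dot_symm M hM.1 zs v, hv]
        simp [dotProduct, Pi.single_apply]
      have e2 : b ⬝ᵥ v = b j := by
        rw [hv]; simp [dotProduct, Pi.single_apply]
      have e3 : ∑ i, ((4:ℕ):ℝ) * (zs i + 0 * v i) ^ 3 * v i = 4 * zs j ^ 3 := by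
        rw [hv]
        simp [Pi.single_apply, mul_ite, Finset.sum_ite_eq']
      rw [e1, e2] at hzero
      push_cast at hzero e3
      rw [e3] at hzero
      linarith
    -- algebra
    set w : Fin n → ℝ := fun i => zs i ^ 3 with hw
    have hbe : b = M *ᵥ zs + J₄ • w := by
      funext jj
      rw [Pi.add_apply, Pi.smul_apply, smul_eq_mul, ← hfoc jj]
    have hb : M⁻¹ *ᵥ b = zs + J₄ • (M⁻¹ *ᵥ w) := by
      rw [hbe, Matrix.mulVec_add, Matrix.mulVec_smul, Matrix.mulVec_mulVec,
        Matrix.nonsing_inv_mul M hdet, Matrix.one_mulVec]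
    have hdiff : zs - M⁻¹ *ᵥ b = (-J₄) • (M⁻¹ *ᵥ w) := by
      rw [hb]; funext i; simp [Pi.smul_apply]
    have hMu : M *ᵥ (M⁻¹ *ᵥ w) = w := by
      rw [Matrix.mulVec_mulVec, Matrix.mul_nonsing_inv M hdet, Matrix.one_mulVec]
    have hl2diff : l2norm (zs - M⁻¹ *ᵥ b) = J₄ * l2norm (M⁻¹ *ᵥ w) := by
      rw [hdiff, l2norm, l2norm]
      have heq2 : ∑ i, ((-J₄) • (M⁻¹ *ᵥ w)) i ^ 2 = J₄^2 * ∑ i, (M⁻¹ *ᵥ w) i ^ 2 := by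
        rw [Finset.mul_sum]
        apply Finset.sum_congr rfl
        intro i _
        simp only [Pi.smul_apply, smul_eq_mul]
        ring
      rw [heq2, Real.sqrt_mul (sq_nonneg _), Real.sqrt_sq hJ₄]
    have hub : l2norm (M⁻¹ *ᵥ w) ≤ l2norm w / minEig M hM.1 := by
      have h1 : minEig M hM.1 * (∑ i, (M⁻¹ *ᵥ w) i ^ 2) ≤ (M⁻¹ *ᵥ w) ⬝ᵥ (M *ᵥ (M⁻¹ *ᵥ w)) :=
        aux_rayleigh M hM.1 _
      rw [hMu] at h1
      have h2 : (M⁻¹ *ᵥ w) ⬝ᵥ w ≤ l2norm (M⁻¹ *ᵥ w) * l2norm w := aux_cauchy_schwarz _ _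
      have h3 : (l2norm (M⁻¹ *ᵥ w))^2 = ∑ i, (M⁻¹ *ᵥ w) i ^ 2 :=
        Real.sq_sqrt (Finset.sum_nonneg fun i _ => sq_nonneg _)
      have hL : 0 ≤ l2norm (M⁻¹ *ᵥ w) := Real.sqrt_nonneg _
      have hW : 0 ≤ l2norm w := Real.sqrt_nonneg _
      rcases eq_or_lt_of_le hL with h0 | h0
      · rw [← h0]; positivity
      · rw [le_div_iff₀ hmpos]
        have hkey : minEig M hM.1 * (l2norm (M⁻¹ *ᵥ w))^2 ≤ l2norm (M⁻¹ *ᵥ w) * l2norm w := by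
          rw [h3]; exact le_trans h1 h2
        nlinarith
    have hSb : ∀ i, |zs i| ≤ ⨆ i, |zs i| := fun i =>
      le_ciSup (f := fun i => |zs i|) (Set.Finite.bddAbove (Set.finite_range _)) i
    have hS0 : 0 ≤ ⨆ i, |zs i| := by
      obtain ⟨i0⟩ := Fin.pos_iff_nonempty.mp (Nat.pos_of_ne_zero (NeZero.ne n))
      exact le_trans (abs_nonneg _) (hSb i0)
    have hwb : l2norm w ≤ (⨆ i, |zs i|)^2 * l2norm zs := by
      rw [l2norm, l2norm]
      have hterm : ∀ i ∈ Finset.univ, w i ^ 2 ≤ (⨆ i, |zs i|)^4 * zs i ^ 2 := by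
        intro i _
        have h1 := hSb i
        have h2 : zs i ^ 2 ≤ (⨆ i, |zs i|)^2 := by
          nlinarith [sq_abs (zs i), abs_nonneg (zs i)]
        show (zs i ^ 3)^2 ≤ (⨆ i, |zs i|)^4 * zs i ^ 2
        nlinarith [mul_le_mul_of_nonneg_right
          (mul_le_mul h2 h2 (sq_nonneg _) (sq_nonneg _)) (sq_nonneg (zs i))]
      calc Real.sqrt (∑ i, w i ^ 2) ≤ Real.sqrt (∑ i, (⨆ i, |zs i|)^4 * zs i ^ 2) :=
            Real.sqrt_le_sqrt (Finset.sum_le_sum hterm)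
        _ = Real.sqrt ((⨆ i, |zs i|)^4 * ∑ i, zs i ^ 2) := by rw [Finset.mul_sum]
        _ = (⨆ i, |zs i|)^2 * Real.sqrt (∑ i, zs i ^ 2) := by
            rw [show (⨆ i, |zs i|)^4 = ((⨆ i, |zs i|)^2)^2 by ring,
              Real.sqrt_mul (sq_nonneg _), Real.sqrt_sq (sq_nonneg _)]
    rw [hl2diff]
    calc J₄ * l2norm (M⁻¹ *ᵥ w) ≤ J₄ * (l2norm w / minEig M hM.1) :=
          mul_le_mul_of_nonneg_left hub hJ₄
      _ ≤ J₄ * (((⨆ i, |zs i|)^2 * l2norm zs) / minEig M hM.1) := by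
          apply mul_le_mul_of_nonneg_left _ hJ₄
          exact (div_le_div_iff_of_pos_right hmpos).mpr hwb
      _ = (J₄ / minEig M hM.1) * (⨆ i, |zs i|)^2 * l2norm zs := by ring
  refine ⟨hstrict, ⟨zmin, hzmin, ?_⟩, hbound⟩
  intro y hy
  exact hstrict.eq_of_isMinOn (isMinOn_iff.mpr fun x _ => hy x)
    (isMinOn_iff.mpr fun x _ => hzmin x) (Set.mem_univ _) (Set.mem_univ _)
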